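/- Let (kᵢ) be a sequence of positive naturals with kᵢ₊₁ ≥ 2kᵢ for all i, let ℓ₀ = (1,1,1,1) (a row vector), ℓᵢ₊₁ = ℓᵢ·A(kᵢ), and let (wᵢ) be a sequence in ℝ₊³ with wᵢ = B(kᵢ)·wᵢ₊₁. Define Sᵢ = ℓᵢ·C·wᵢ. Then Sᵢ₊₁ > (1 − 2/kᵢ)·Sᵢ for all i ≥ 0. -/

import Mathlib

/-!
Write `ℓᵢ = (a, b, c, d)` and `wᵢ₊₁ = (x, y, z)`. Then `wᵢ = (k x + k y + z, x, y)` and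
`ℓᵢ₊₁ = (b, c + d, a + d, k a + (k - 1) d)` with `k = kᵢ`, and a direct computation gives
`k Sᵢ₊₁ - (k - 2) Sᵢ = k (a + d) (x - k y) + (positive terms)`.
All entries of `ℓᵢ` stay positive, and the recursion `wᵢ₊₁ = B(kᵢ₊₁) wᵢ₊₂` gives
`x > kᵢ₊₁ y ≥ kᵢ y`, so the right-hand side is positive.
-/

open Matrix

/-- The matrix `B(k)` from the paper, over the reals. -/
def Bmat (k : ℕ) : Matrix (Fin 3) (Fin 3) ℝ := !![(k : ℝ), (k : ℝ), 1; 1, 0, 0; 0, 1, 0]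

/-- The matrix `A(k)` from the paper. -/
def Amat (k : ℕ) : Matrix (Fin 4) (Fin 4) ℝ :=
  !![0, 0, 1, (k : ℝ); 1, 0, 0, 0; 0, 1, 0, 0; 0, 1, 1, (k : ℝ) - 1]

/-- The matrix `C` from the paper. -/
def Cmat : Matrix (Fin 4) (Fin 3) ℝ := !![1, 0, 0; 0, 1, 0; 0, 0, 1; 1, 0, 0]

lemma Bmat_mulVec (k : ℕ) (v : Fin 3 → ℝ) :
    Bmat k *ᵥ v = ![k * v 0 + k * v 1 + v 2, v 0, v 1] := by
  ext j; fin_cases j <;> simp [Bmat, mulVec, dotProduct, Fin.sum_univ_three]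

lemma vecMul_Amat (k : ℕ) (v : Fin 4 → ℝ) :
    vecMul v (Amat k) = ![v 1, v 2 + v 3, v 0 + v 3, k * v 0 + (k - 1) * v 3] := by
  ext j; fin_cases j <;> simp [Amat, vecMul, dotProduct, Fin.sum_univ_four]; ring

lemma dotProduct_Cmat_mulVec (v : Fin 4 → ℝ) (u : Fin 3 → ℝ) :
    v ⬝ᵥ Cmat *ᵥ u = (v 0 + v 3) * u 0 + v 1 * u 1 + v 2 * u 2 := by
  simp [Cmat, mulVec, dotProduct, Fin.sum_univ_four, Fin.sum_univ_three]; ring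

lemma vecMul_Amat_pos {k : ℕ} (hk : 1 ≤ k) {v : Fin 4 → ℝ} (hv : ∀ j, 0 < v j) (j : Fin 4) :
    0 < vecMul v (Amat k) j := by
  have hk' : (1 : ℝ) ≤ k := by exact_mod_cast hk
  have := hv 0; have := hv 1; have := hv 2; have := hv 3
  rw [vecMul_Amat]
  fin_cases j <;>
    simp only [Fin.zero_eta, Fin.mk_one, Fin.reduceFinMk, cons_val_zero, cons_val_one, cons_val] <;>
    nlinarith

lemma mul_Bmat_mulVec_one_lt {r : ℝ} {k : ℕ} (hr : r ≤ k) {v : Fin 3 → ℝ} (hv : ∀ j, 0 < v j) :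
    r * (Bmat k *ᵥ v) 1 < (Bmat k *ᵥ v) 0 := by
  simp only [Bmat_mulVec, cons_val_zero, cons_val_one]
  nlinarith [hv 0, hv 1, hv 2, mul_nonneg (Nat.cast_nonneg (α := ℝ) k) (hv 1).le]

theorem one_sub_two_div_mul_lt {k : ℕ} (hk : 1 ≤ k) {v : Fin 4 → ℝ} (hv : ∀ j, 0 < v j)
    {u : Fin 3 → ℝ} (hu : ∀ j, 0 < u j) (hku : k * u 1 ≤ u 0) :
    (1 - 2 / (k : ℝ)) * (v ⬝ᵥ Cmat *ᵥ (Bmat k *ᵥ u)) < vecMul v (Amat k) ⬝ᵥ Cmat *ᵥ u := by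
  have hk0 : (0 : ℝ) < k := by exact_mod_cast hk
  rw [dotProduct_Cmat_mulVec, dotProduct_Cmat_mulVec, Bmat_mulVec, vecMul_Amat]
  simp only [cons_val]
  rw [one_sub_div hk0.ne', div_mul_eq_mul_div, div_lt_iff₀ hk0]
  set a := v 0; set b := v 1; set c := v 2; set d := v 3
  set x := u 0; set y := u 1; set z := u 2
  have := hv 0; have := hv 1; have := hv 2; have := hv 3
  have := hu 0; have := hu 1; have := hu 2
  have hslack : 0 ≤ k * (a + d) * (x - k * y) := mul_nonneg (by positivity) (by linarith)
  have hrest :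
      0 < k * a * x + k * (2 * a + 3 * d) * y + 2 * (a + d) * z + 2 * b * x + 2 * c * y := by
    positivity
  linear_combination hslack + hrest

theorem stmt6 (k : ℕ → ℕ) (hk : ∀ i, 1 ≤ k i) (hk2 : ∀ i, 2 * k i ≤ k (i + 1))
    (l : ℕ → Fin 4 → ℝ) (hl0 : l 0 = fun _ => 1)
    (hl : ∀ i, l (i + 1) = Matrix.vecMul (l i) (Amat (k i)))
    (w : ℕ → Fin 3 → ℝ) (hw : ∀ i j, 0 < w i j)
    (hwrec : ∀ i, w i = (Bmat (k i)).mulVec (w (i + 1))) :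
    ∀ i, (1 - 2 / (k i : ℝ)) * (l i ⬝ᵥ Cmat.mulVec (w i)) < l (i + 1) ⬝ᵥ Cmat.mulVec (w (i + 1)) := by
  have hl_pos : ∀ i j, 0 < l i j := by
    intro i
    induction i with
    | zero => simp [hl0]
    | succ i ih => rw [hl i]; exact vecMul_Amat_pos (hk i) ih
  intro i
  have hk_mono : (k i : ℝ) ≤ k (i + 1) := by
    exact_mod_cast (show k i ≤ k (i + 1) by linarith [hk2 i])
  have hgrowth : k i * w (i + 1) 1 ≤ w (i + 1) 0 := by
    have := mul_Bmat_mulVec_one_lt hk_mono (hw (i + 2))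
    rw [← hwrec (i + 1)] at this
    exact this.le
  rw [hwrec i, hl i]
  exact one_sub_two_div_mul_lt (hk i) (hl_pos i) (hw (i + 1)) hgrowth
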